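/- Suppose the constant step size satisfies α ≤ 2/L. Then for every epoch k and every 0 ≤ i ≤ n−1, |E[F(x_i^k)] − E[f(x_i^k; σ_k(i+1))]| ≤ 2αG². -/

import Mathlib

open Finset MeasureTheory ProbabilityTheory RealInnerProductSpace

noncomputable section

abbrev Vec (d : ℕ) : Type := EuclideanSpace ℝ (Fin d)

/-- The objective `F(x) = (1/n) ∑ i, f(x; i)`. -/
def avgF {d n : ℕ} (f : Fin n → Vec d → ℝ) : Vec d → ℝ :=
  fun x => (∑ i, f i x) / n

/-- SGDo iterates with constant step size `α`, flattened over epochs: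
`σ j` is the permutation used during epoch `j + 1`, and at total step `t`
(the `t % n`-th step of epoch `t / n + 1`) we take a gradient step on the
component selected by the permutation of the current epoch. -/
def sgdoSeq {d n : ℕ} (hn : 0 < n) (f : Fin n → Vec d → ℝ) (α : ℝ)
    (x0 : Vec d) (σ : ℕ → Equiv.Perm (Fin n)) : ℕ → Vec d
  | 0 => x0
  | t + 1 =>
      sgdoSeq hn f α x0 σ t
        - α • gradient (f (σ (t / n) ⟨t % n, Nat.mod_lt t hn⟩)) (sgdoSeq hn f α x0 σ t)

/-- `x_i^k`, for epoch `k ≥ 1` and within-epoch index `0 ≤ i ≤ n`. -/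
def sgdoIter {d n : ℕ} (hn : 0 < n) (f : Fin n → Vec d → ℝ) (α : ℝ)
    (x0 : Vec d) (σ : ℕ → Equiv.Perm (Fin n)) (k i : ℕ) : Vec d :=
  sgdoSeq hn f α x0 σ ((k - 1) * n + i)

/-- Extend a `K`-tuple of permutations to `ℕ` (junk value beyond `K`). -/
def extendPerm {n K : ℕ} (ω : Fin K → Equiv.Perm (Fin n)) : ℕ → Equiv.Perm (Fin n) :=
  fun j => if h : j < K then ω ⟨j, h⟩ else 1

/-- Expectation of `g` under the uniform distribution on a finite type. -/
def unifExp {Ω : Type*} [Fintype Ω] (g : Ω → ℝ) : ℝ :=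
  (∑ ω, g ω) / (Fintype.card Ω)

instance permMeasurableSpace {n : ℕ} : MeasurableSpace (Equiv.Perm (Fin n)) := ⊤

/-- The uniform probability measure on a finite type. -/
def unifMeasure (Ω : Type*) [MeasurableSpace Ω] [Fintype Ω] [Nonempty Ω] : Measure Ω :=
  (PMF.uniformOfFintype Ω).toMeasure

/-- Wasserstein-1 distance between measures on `ℝ^d`, as an infimum over couplings. -/
def W1dist {d : ℕ} (P Q : Measure (Vec d)) : ℝ :=
  sInf { c | ∃ μ : Measure (Vec d × Vec d), IsProbabilityMeasure μ ∧
    μ.map Prod.fst = P ∧ μ.map Prod.snd = Q ∧ c = ∫ p, ‖p.1 - p.2‖ ∂μ }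

/-- Wasserstein-2 distance between measures on `ℝ^d`, as an infimum over couplings. -/
def W2dist {d : ℕ} (P Q : Measure (Vec d)) : ℝ :=
  sInf { c | ∃ μ : Measure (Vec d × Vec d), IsProbabilityMeasure μ ∧
    μ.map Prod.fst = P ∧ μ.map Prod.snd = Q ∧ c = Real.sqrt (∫ p, ‖p.1 - p.2‖ ^ 2 ∂μ) }

/-!
Right-multiplying the permutation of epoch `k` by the transposition `(p i)` preserves the uniform
law and turns `σ_k(i)` into `σ_k(p)`. Hence `E[f(x_i^k; σ_k(i))]` is the average over `p` of
`E[f(y_p; σ_k(p))]`, where `y_p` is the `i`-th iterate of the swapped run, while `E[F(x_i^k)]` is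
the average of `E[f(x_i^k; σ_k(p))]`. The swapped run agrees with the original one up to step `p`,
is at most `2αG` away after that step, and afterwards both runs take the same gradient steps,
which are nonexpansive for convex `L`-smooth functions when `α ≤ 2/L` (co-coercivity of the
gradient). So `‖y_p - x_i^k‖ ≤ 2αG`, and the `G`-Lipschitz components give the bound `2αG²`.
-/
section GradientInequalities

variable {E : Type*} [NormedAddCommGroup E] [InnerProductSpace ℝ E] [CompleteSpace E]
  {f : E → ℝ}

lemma hasDerivAt_comp_add_smul (hf : Differentiable ℝ f) (x v : E) (t : ℝ) :
    HasDerivAt (fun s : ℝ => f (x + s • v)) ⟪gradient f (x + t • v), v⟫ t := by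
  have hline : HasDerivAt (fun s : ℝ => x + s • v) v t := by
    simpa using ((hasDerivAt_id t).smul_const v).const_add x
  simpa [Function.comp_def, InnerProductSpace.toDual_apply_apply] using
    (hf (x + t • v)).hasGradientAt.hasFDerivAt.comp_hasDerivAt t hline

lemma ConvexOn.add_inner_gradient_le (hconv : ConvexOn ℝ Set.univ f) (hf : Differentiable ℝ f)
    (x y : E) : f x + ⟪gradient f x, y - x⟫ ≤ f y := by
  have hline : ConvexOn ℝ Set.univ (fun t : ℝ => f (x + t • (y - x))) := by
    simpa [Function.comp_def, AffineMap.lineMap_apply, add_comm] using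
      hconv.comp_affineMap (AffineMap.lineMap x y)
  have hderiv : HasDerivAt (fun t : ℝ => f (x + t • (y - x))) ⟪gradient f x, y - x⟫ 0 := by
    simpa using hasDerivAt_comp_add_smul hf x (y - x) 0
  have hslope := hline.le_slope_of_hasDerivAt (Set.mem_univ 0) (Set.mem_univ 1) one_pos hderiv
  rw [slope_def_field] at hslope
  simp only [one_smul, zero_smul, add_zero, add_sub_cancel, sub_zero, div_one] at hslope
  linarith

lemma le_add_inner_gradient_add_sq_of_lipschitz (hf : Differentiable ℝ f) {L : ℝ}
    (hsmooth : ∀ a b, ‖gradient f a - gradient f b‖ ≤ L * ‖a - b‖) (x y : E) :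
    f y ≤ f x + ⟪gradient f x, y - x⟫ + L / 2 * ‖y - x‖ ^ 2 := by
  set v := y - x
  set c := ⟪gradient f x, v⟫
  -- `ψ` vanishes at `0` and its derivative is nonnegative by the Lipschitz bound on `∇f`.
  set ψ : ℝ → ℝ := fun t => f x + t * c + L / 2 * ‖v‖ ^ 2 * t ^ 2 - f (x + t • v)
  have hψ : ∀ t, HasDerivAt ψ (c + L / 2 * ‖v‖ ^ 2 * (2 * t) - ⟪gradient f (x + t • v), v⟫) t :=
    fun t => (((hasDerivAt_mul_const c).const_add (f x)).add
      ((hasDerivAt_pow 2 t).const_mul _)).sub (hasDerivAt_comp_add_smul hf x v t) |>.congr_deriv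
      (by simp)
  have hmono : MonotoneOn ψ (Set.Icc 0 1) := by
    refine monotoneOn_of_deriv_nonneg (convex_Icc 0 1)
      (HasDerivAt.continuousOn fun t _ => hψ t)
      (fun t _ => (hψ t).differentiableAt.differentiableWithinAt) fun t ht => ?_
    rw [interior_Icc] at ht
    have hgrad : ‖gradient f (x + t • v) - gradient f x‖ ≤ L * (t * ‖v‖) := by
      simpa [norm_smul, abs_of_pos ht.1] using hsmooth (x + t • v) x
    have hinner : ⟪gradient f (x + t • v) - gradient f x, v⟫ ≤ L * (t * ‖v‖) * ‖v‖ :=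
      (real_inner_le_norm _ _).trans (by gcongr)
    rw [inner_sub_left] at hinner
    rw [(hψ t).deriv]
    nlinarith
  have h01 := hmono (by simp) (by simp) zero_le_one
  simp only [ψ, v, zero_mul, mul_zero, one_mul, mul_one, add_zero, ne_eq, OfNat.ofNat_ne_zero,
    not_false_eq_true, zero_pow, one_pow, zero_smul, one_smul, sub_self, add_sub_cancel,
    sub_nonneg] at h01
  linarith

lemma ConvexOn.add_inner_gradient_add_sq_le (hconv : ConvexOn ℝ Set.univ f)
    (hf : Differentiable ℝ f) {L : ℝ} (hL : 0 < L)
    (hsmooth : ∀ a b, ‖gradient f a - gradient f b‖ ≤ L * ‖a - b‖) (x y : E) :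
    f x + ⟪gradient f x, y - x⟫ + ‖gradient f y - gradient f x‖ ^ 2 / (2 * L) ≤ f y := by
  set u := gradient f y - gradient f x
  -- Compare both sides at the gradient step `w` taken from `y`.
  set w := y - L⁻¹ • u
  have hdesc := le_add_inner_gradient_add_sq_of_lipschitz hf hsmooth y w
  have hconvw := hconv.add_inner_gradient_le hf x w
  have hwy : w - y = -(L⁻¹ • u) := by simp [w]
  have hwx : w - x = (y - x) - L⁻¹ • u := by simp only [w]; abel
  rw [hwy, inner_neg_right, real_inner_smul_right, norm_neg, norm_smul, Real.norm_eq_abs,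
    abs_of_pos (inv_pos.mpr hL)] at hdesc
  rw [hwx, inner_sub_right, real_inner_smul_right] at hconvw
  have hu : ⟪gradient f y, u⟫ - ⟪gradient f x, u⟫ = ‖u‖ ^ 2 := by
    rw [← inner_sub_left, real_inner_self_eq_norm_sq]
  have key : ‖u‖ ^ 2 / (2 * L) = L⁻¹ * (⟪gradient f y, u⟫ - ⟪gradient f x, u⟫)
      - L / 2 * (L⁻¹ * ‖u‖) ^ 2 := by
    rw [hu]; field_simp; ring
  linarith

lemma ConvexOn.sq_norm_sub_gradient_le_inner (hconv : ConvexOn ℝ Set.univ f)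
    (hf : Differentiable ℝ f) {L : ℝ} (hL : 0 < L)
    (hsmooth : ∀ a b, ‖gradient f a - gradient f b‖ ≤ L * ‖a - b‖) (x y : E) :
    ‖gradient f x - gradient f y‖ ^ 2 / L ≤ ⟪gradient f x - gradient f y, x - y⟫ := by
  have hxy := hconv.add_inner_gradient_add_sq_le hf hL hsmooth x y
  have hyx := hconv.add_inner_gradient_add_sq_le hf hL hsmooth y x
  rw [norm_sub_rev] at hxy
  have hinner : ⟪gradient f x - gradient f y, x - y⟫
      = -⟪gradient f x, y - x⟫ - ⟪gradient f y, x - y⟫ := by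
    rw [inner_sub_left, ← neg_sub x y, inner_neg_right, neg_neg]
  have hsplit : ‖gradient f x - gradient f y‖ ^ 2 / L
      = ‖gradient f x - gradient f y‖ ^ 2 / (2 * L) * 2 := by
    field_simp
  linarith

lemma ConvexOn.norm_sub_smul_gradient_sub_le (hconv : ConvexOn ℝ Set.univ f)
    (hf : Differentiable ℝ f) {L α : ℝ} (hL : 0 < L) (hα : 0 ≤ α) (hαL : α ≤ 2 / L)
    (hsmooth : ∀ a b, ‖gradient f a - gradient f b‖ ≤ L * ‖a - b‖) (x y : E) :
    ‖(x - α • gradient f x) - (y - α • gradient f y)‖ ≤ ‖x - y‖ := by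
  set u := gradient f x - gradient f y
  have hcoco := hconv.sq_norm_sub_gradient_le_inner hf hL hsmooth x y
  have hsq : ‖(x - α • gradient f x) - (y - α • gradient f y)‖ ^ 2
      = ‖x - y‖ ^ 2 - 2 * α * ⟪u, x - y⟫ + α ^ 2 * ‖u‖ ^ 2 := by
    rw [show (x - α • gradient f x) - (y - α • gradient f y) = (x - y) - α • u by
      simp only [u, smul_sub]; abel, norm_sub_sq_real, real_inner_smul_right, norm_smul,
      Real.norm_eq_abs, abs_of_nonneg hα, real_inner_comm]
    ring
  have hαL' : α * L ≤ 2 := (le_div_iff₀ hL).mp hαL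
  have hquad : α ^ 2 * ‖u‖ ^ 2 ≤ 2 * α * (‖u‖ ^ 2 / L) := by
    rw [mul_div_assoc', le_div_iff₀ hL]
    have := mul_le_mul_of_nonneg_left hαL' (mul_nonneg hα (sq_nonneg ‖u‖))
    nlinarith
  have hcross : 2 * α * (‖u‖ ^ 2 / L) ≤ 2 * α * ⟪u, x - y⟫ := by gcongr
  refine (pow_le_pow_iff_left₀ (norm_nonneg _) (norm_nonneg _) two_ne_zero).mp ?_
  linarith

lemma abs_sub_le_of_norm_gradient_le (hf : Differentiable ℝ f) {G : ℝ}
    (hG : ∀ x, ‖gradient f x‖ ≤ G) (x y : E) : |f x - f y| ≤ G * ‖x - y‖ := by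
  have hfderiv : ∀ z ∈ Set.univ, ‖fderiv ℝ f z‖ ≤ G := fun z _ => by
    rw [← toDual_gradient, LinearIsometryEquiv.norm_map]
    exact hG z
  simpa [Real.norm_eq_abs] using
    convex_univ.norm_image_sub_le_of_norm_fderiv_le (fun z _ => hf z) hfderiv trivial trivial

end GradientInequalities

section SGDo

variable {d n : ℕ} (hn : 0 < n) (f : Fin n → Vec d → ℝ) (α : ℝ) (x0 : Vec d)

def sgdoIndex (σ : ℕ → Equiv.Perm (Fin n)) (t : ℕ) : Fin n :=
  σ (t / n) ⟨t % n, Nat.mod_lt t hn⟩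

lemma sgdoSeq_succ (σ : ℕ → Equiv.Perm (Fin n)) (t : ℕ) :
    sgdoSeq hn f α x0 σ (t + 1) = sgdoSeq hn f α x0 σ t
      - α • gradient (f (sgdoIndex hn σ t)) (sgdoSeq hn f α x0 σ t) :=
  rfl

variable {hn f α x0}

lemma sgdoSeq_congr {σ τ : ℕ → Equiv.Perm (Fin n)} {T : ℕ}
    (h : ∀ t < T, sgdoIndex hn σ t = sgdoIndex hn τ t) :
    sgdoSeq hn f α x0 σ T = sgdoSeq hn f α x0 τ T := by
  induction T with
  | zero => rfl
  | succ T ih =>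
    rw [sgdoSeq_succ, sgdoSeq_succ, ih fun t ht => h t (ht.trans T.lt_succ_self),
      h T T.lt_succ_self]

lemma norm_sgdoSeq_succ_sub_le (hα : 0 ≤ α) {G : ℝ} (hG : ∀ j x, ‖gradient (f j) x‖ ≤ G)
    {σ τ : ℕ → Equiv.Perm (Fin n)} {t : ℕ}
    (h : sgdoSeq hn f α x0 σ t = sgdoSeq hn f α x0 τ t) :
    ‖sgdoSeq hn f α x0 σ (t + 1) - sgdoSeq hn f α x0 τ (t + 1)‖ ≤ 2 * α * G := by
  rw [sgdoSeq_succ, sgdoSeq_succ, h, sub_sub_sub_cancel_left, ← smul_sub, norm_smul,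
    Real.norm_eq_abs, abs_of_nonneg hα]
  calc α * ‖_ - _‖ ≤ α * (G + G) := by gcongr; exact norm_sub_le_of_le (hG _ _) (hG _ _)
    _ = 2 * α * G := by ring

lemma norm_sgdoSeq_sub_le_of_nonexpansive
    (hstep : ∀ j x y, ‖(x - α • gradient (f j) x) - (y - α • gradient (f j) y)‖ ≤ ‖x - y‖)
    {σ τ : ℕ → Equiv.Perm (Fin n)} {t₀ T : ℕ} (hle : t₀ ≤ T)
    (h : ∀ t, t₀ ≤ t → t < T → sgdoIndex hn σ t = sgdoIndex hn τ t) :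
    ‖sgdoSeq hn f α x0 σ T - sgdoSeq hn f α x0 τ T‖
      ≤ ‖sgdoSeq hn f α x0 σ t₀ - sgdoSeq hn f α x0 τ t₀‖ := by
  induction T, hle using Nat.le_induction with
  | base => rfl
  | succ T hT ih =>
    rw [sgdoSeq_succ, sgdoSeq_succ, h T hT T.lt_succ_self]
    exact (hstep _ _ _).trans (ih fun t h₁ h₂ => h t h₁ (h₂.trans T.lt_succ_self))

lemma sgdoIndex_mul_mulSingle_swap {σ : ℕ → Equiv.Perm (Fin n)} {j t : ℕ} {p i : Fin n}
    (hp : t ≠ j * n + p) (hi : t ≠ j * n + i) :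
    sgdoIndex hn (σ * Pi.mulSingle j (Equiv.swap p i)) t = sgdoIndex hn σ t := by
  rw [sgdoIndex, sgdoIndex, Pi.mul_apply, Equiv.Perm.mul_apply]
  congr 1
  by_cases htj : t / n = j
  · have ht := Nat.div_add_mod' t n
    rw [htj] at ht
    rw [htj, Pi.mulSingle_eq_same]
    apply Equiv.swap_apply_of_ne_of_ne <;> rintro rfl
    exacts [hp ht.symm, hi ht.symm]
  · rw [Pi.mulSingle_eq_of_ne htj, Equiv.Perm.one_apply]

lemma norm_sgdoSeq_mul_mulSingle_swap_sub_le (hα : 0 ≤ α) {G : ℝ}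
    (hG : ∀ j x, ‖gradient (f j) x‖ ≤ G)
    (hstep : ∀ j x y, ‖(x - α • gradient (f j) x) - (y - α • gradient (f j) y)‖ ≤ ‖x - y‖)
    (σ : ℕ → Equiv.Perm (Fin n)) (j : ℕ) (p i : Fin n) :
    ‖sgdoSeq hn f α x0 (σ * Pi.mulSingle j (Equiv.swap p i)) (j * n + i)
      - sgdoSeq hn f α x0 σ (j * n + i)‖ ≤ 2 * α * G := by
  rcases lt_or_ge p i with hpi | hip
  · rw [Fin.lt_def] at hpi
    -- The runs first differ at step `j n + p` and use the same components afterwards.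
    have hagree : sgdoSeq hn f α x0 (σ * Pi.mulSingle j (Equiv.swap p i)) (j * n + p)
        = sgdoSeq hn f α x0 σ (j * n + p) :=
      sgdoSeq_congr fun t ht => sgdoIndex_mul_mulSingle_swap (by omega) (by omega)
    calc _ ≤ ‖sgdoSeq hn f α x0 (σ * Pi.mulSingle j (Equiv.swap p i)) (j * n + p + 1)
          - sgdoSeq hn f α x0 σ (j * n + p + 1)‖ :=
          norm_sgdoSeq_sub_le_of_nonexpansive hstep (by omega)
            fun t h₁ h₂ => sgdoIndex_mul_mulSingle_swap (by omega) (by omega)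
      _ ≤ 2 * α * G := norm_sgdoSeq_succ_sub_le hα hG hagree
  · rw [Fin.le_def] at hip
    rw [sgdoSeq_congr fun t ht => sgdoIndex_mul_mulSingle_swap (by omega) (by omega), sub_self,
      norm_zero]
    have := (norm_nonneg _).trans (hG p x0)
    positivity

end SGDo

lemma extendPerm_coe {n K : ℕ} (ω : Fin K → Equiv.Perm (Fin n)) (j : Fin K) :
    extendPerm ω j = ω j :=
  dif_pos j.isLt

lemma extendPerm_mul_mulSingle {n K : ℕ} (ω : Fin K → Equiv.Perm (Fin n)) (j : Fin K)
    (s : Equiv.Perm (Fin n)) :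
    extendPerm (ω * Pi.mulSingle j s) = extendPerm ω * Pi.mulSingle (j : ℕ) s := by
  funext m
  simp only [extendPerm, Pi.mul_apply, Pi.mulSingle_apply]
  split_ifs <;> simp_all [Fin.ext_iff]

section UniformExpectation

variable {Ω Ω' : Type*} [Fintype Ω] [Fintype Ω']

lemma unifExp_const [Nonempty Ω] (c : ℝ) : unifExp (fun _ : Ω => c) = c := by
  simp [unifExp]

lemma unifExp_sub (g h : Ω → ℝ) : unifExp (fun ω => g ω - h ω) = unifExp g - unifExp h := by
  simp only [unifExp, Finset.sum_sub_distrib, sub_div]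

lemma unifExp_comp_equiv (e : Ω ≃ Ω') (g : Ω' → ℝ) :
    unifExp (fun ω => g (e ω)) = unifExp g := by
  simp only [unifExp, Equiv.sum_comp, Fintype.card_congr e]

lemma unifExp_comm (g : Ω → Ω' → ℝ) :
    unifExp (fun ω => unifExp (g ω)) = unifExp (fun ω' => unifExp (fun ω => g ω ω')) := by
  simp only [unifExp, ← Finset.sum_div, div_div]
  rw [Finset.sum_comm, mul_comm]

lemma abs_unifExp_le [Nonempty Ω] {g : Ω → ℝ} {c : ℝ} (h : ∀ ω, |g ω| ≤ c) :
    |unifExp g| ≤ c := by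
  have hcard : (0 : ℝ) < Fintype.card Ω := by exact_mod_cast Fintype.card_pos
  rw [unifExp, abs_div, abs_of_pos hcard, div_le_iff₀ hcard]
  calc |∑ ω, g ω| ≤ ∑ ω, |g ω| := Finset.abs_sum_le_sum_abs _ _
    _ ≤ ∑ _ω : Ω, c := Finset.sum_le_sum fun ω _ => h ω
    _ = c * Fintype.card Ω := by simp [mul_comm]

lemma abs_unifExp_unifExp_sub_le [Nonempty Ω] {ι : Type*} [Fintype ι] (h : ι → Ω → ℝ) (i : ι)
    (Φ : ι → Ω ≃ Ω) {c : ℝ} (hΦ : ∀ p ω, |h p ω - h i (Φ p ω)| ≤ c) :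
    |unifExp (fun ω => unifExp (fun p => h p ω)) - unifExp (h i)| ≤ c := by
  have : Nonempty ι := ⟨i⟩
  have hreindex : unifExp (h i) = unifExp (fun ω => unifExp (fun p => h i (Φ p ω))) := by
    simp only [unifExp_comm (fun ω p => h i (Φ p ω)), unifExp_comp_equiv, unifExp_const]
  rw [hreindex, ← unifExp_sub]
  simp only [← unifExp_sub]
  exact abs_unifExp_le fun ω => abs_unifExp_le fun p => hΦ p ω

end UniformExpectation

lemma avgF_eq_unifExp {d n : ℕ} (f : Fin n → Vec d → ℝ) (π : Equiv.Perm (Fin n)) (x : Vec d) :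
    avgF f x = unifExp (fun p => f (π p) x) := by
  rw [avgF, unifExp, Fintype.card_fin, Equiv.sum_comp π (fun j => f j x)]

theorem bias_bound_general
    (d n K : ℕ) (hn : 0 < n)
    (f : Fin n → Vec d → ℝ) (G L α : ℝ) (x0 : Vec d)
    (hα : 0 < α) (hα2 : α ≤ 2 / L)
    (hdiff : ∀ i, Differentiable ℝ (f i))
    (hconv : ∀ i, ConvexOn ℝ Set.univ (f i))
    (hGlip : ∀ i x, ‖gradient (f i) x‖ ≤ G)
    (hLsmooth : ∀ i x y, ‖gradient (f i) x - gradient (f i) y‖ ≤ L * ‖x - y‖)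
    (k : ℕ) (hk1 : 1 ≤ k) (hkK : k ≤ K) (i : Fin n) :
    |unifExp (fun ω : Fin K → Equiv.Perm (Fin n) =>
        avgF f (sgdoIter hn f α x0 (extendPerm ω) k (i : ℕ)))
      - unifExp (fun ω : Fin K → Equiv.Perm (Fin n) =>
        f (extendPerm ω (k - 1) i) (sgdoIter hn f α x0 (extendPerm ω) k (i : ℕ)))|
    ≤ 2 * α * G ^ 2 := by
  have hL : 0 < L := (div_pos_iff_of_pos_left two_pos).mp (hα.trans_le hα2)
  have hstep j := (hconv j).norm_sub_smul_gradient_sub_le (hdiff j) hL hα.le hα2 (hLsmooth j)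
  set j : Fin K := ⟨k - 1, by omega⟩
  set X := fun ω : Fin K → Equiv.Perm (Fin n) => sgdoIter hn f α x0 (extendPerm ω) k i
  set Φ : Fin n → Equiv.Perm (Fin K → Equiv.Perm (Fin n)) :=
    fun p => Equiv.mulRight (Pi.mulSingle j (Equiv.swap p i))
  have hdist p ω : ‖X ω - X (Φ p ω)‖ ≤ 2 * α * G := by
    rw [norm_sub_rev]
    simp only [X, Φ, sgdoIter, Equiv.coe_mulRight, extendPerm_mul_mulSingle]
    exact norm_sgdoSeq_mul_mulSingle_swap_sub_le hα.le hGlip hstep _ _ p i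
  have hterm p ω : |f (ω j p) (X ω) - f (Φ p ω j i) (X (Φ p ω))| ≤ 2 * α * G ^ 2 := by
    have hG : 0 ≤ G := (norm_nonneg _).trans (hGlip i x0)
    rw [show Φ p ω j i = ω j p by simp [Φ]]
    calc _ ≤ G * ‖X ω - X (Φ p ω)‖ := abs_sub_le_of_norm_gradient_le (hdiff _) (hGlip _) _ _
      _ ≤ G * (2 * α * G) := by gcongr; exact hdist p ω
      _ = 2 * α * G ^ 2 := by ring
  have key := abs_unifExp_unifExp_sub_le (fun p ω => f (ω j p) (X ω)) i Φ hterm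
  rw [show k - 1 = (j : ℕ) from rfl]
  simpa only [← avgF_eq_unifExp, extendPerm_coe] using key

/-- If `α ≤ 2/L`, then for every epoch `k` and `0 ≤ i ≤ n−1`,
`|E[F(x_i^k)] − E[f(x_i^k; σ_k(i+1))]| ≤ 2αG²`. -/
theorem bias_bound
    (d n K : ℕ) (hn : 0 < n) (hK : 0 < K)
    (f : Fin n → Vec d → ℝ) (G L α : ℝ) (x0 : Vec d)
    (hα : 0 < α) (hα2 : α ≤ 2 / L)
    (hdiff : ∀ i, Differentiable ℝ (f i))
    (hconv : ∀ i, ConvexOn ℝ Set.univ (f i))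
    (hGlip : ∀ i x, ‖gradient (f i) x‖ ≤ G)
    (hLsmooth : ∀ i x y, ‖gradient (f i) x - gradient (f i) y‖ ≤ L * ‖x - y‖)
    (k : ℕ) (hk1 : 1 ≤ k) (hkK : k ≤ K) (i : Fin n) :
    |unifExp (fun ω : Fin K → Equiv.Perm (Fin n) =>
        avgF f (sgdoIter hn f α x0 (extendPerm ω) k (i : ℕ)))
      - unifExp (fun ω : Fin K → Equiv.Perm (Fin n) =>
        f (extendPerm ω (k - 1) i) (sgdoIter hn f α x0 (extendPerm ω) k (i : ℕ)))|
    ≤ 2 * α * G ^ 2 :=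
  bias_bound_general d n K hn f G L α x0 hα hα2 hdiff hconv hGlip hLsmooth k hk1 hkK i
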